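/- arXiv:2004.03048 — 5 statements merged into one kernel-verified Lean document; each statement's English description precedes it below -/
import Mathlib

section
/- Let f > 0 and C_lb > 0. Consider a left pinhole camera at the origin and a back pinhole camera displaced backward along the optical axis, so that a 3D point with left-frame coordinates (x, y, z) has back-frame coordinates (x, y, z + C_lb); both cameras have focal length f and the same principal point (c_x, c_y). Let X₁ = (x₁, y₁, z) and X₂ = (x₂, y₂, z) be two distinct 3D points with the same depth z > 0. Let m_l be the Euclidean distance between their pixel projections in the left image and m_b the Euclidean distance between their pixel projections in the back image. Then m_b > 0, m_l/m_b - 1 > 0, and z = C_lb / (m_l/m_b - 1). -/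
/-!
At a common depth `w`, the pixel displacement between two points is their lateral displacement
scaled by `f / w`; the principal point cancels. Hence `ml / mb = (z + Clb) / z`, that is,
`ml / mb - 1 = Clb / z`.
-/

theorem sub_sq_add_sub_sq_pos {a b c d : ℝ} (h : (a, c) ≠ (b, d)) :
    0 < (a - b) ^ 2 + (c - d) ^ 2 := by
  rcases not_and_or.1 (mt Prod.ext_iff.2 h) with hab | hcd
  · have : a - b ≠ 0 := sub_ne_zero.2 hab
    positivity
  · have : c - d ≠ 0 := sub_ne_zero.2 hcd
    positivity

theorem dist_pinhole_projection (f cx cy x₁ y₁ x₂ y₂ w : ℝ) :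
    √(((f * x₁ / w + cx) - (f * x₂ / w + cx)) ^ 2 + ((f * y₁ / w + cy) - (f * y₂ / w + cy)) ^ 2)
      = |f| * √((x₁ - x₂) ^ 2 + (y₁ - y₂) ^ 2) / |w| := by
  have hscale : ((f * x₁ / w + cx) - (f * x₂ / w + cx)) ^ 2
      + ((f * y₁ / w + cy) - (f * y₂ / w + cy)) ^ 2
      = (f / w) ^ 2 * ((x₁ - x₂) ^ 2 + (y₁ - y₂) ^ 2) := by ring
  rw [hscale, Real.sqrt_mul (sq_nonneg _), Real.sqrt_sq_eq_abs, abs_div]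
  ring

theorem div_div_div_add_sub_one {K : Type*} [Field K] {k z C : K} (hk : k ≠ 0) (hz : z ≠ 0) :
    k / z / (k / (z + C)) - 1 = C / z := by
  field_simp
  ring

/-- Proposition 2: depth from left/back pixel distances.
A pinhole camera with focal length `f` and principal point `(cx, cy)` projects
`(x, y, z)` (with `z > 0`) to `(f*x/z + cx, f*y/z + cy)`.  The back camera sees
the point at depth `z + Clb`. -/
theorem depth_from_back_view
    (f Clb cx cy : ℝ) (hf : f > 0) (hClb : Clb > 0)
    (x₁ y₁ x₂ y₂ z : ℝ) (hz : z > 0)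
    (hne : (x₁, y₁, z) ≠ (x₂, y₂, z))
    (ml mb : ℝ)
    (hml : ml = Real.sqrt (((f * x₁ / z + cx) - (f * x₂ / z + cx))^2 +
                           ((f * y₁ / z + cy) - (f * y₂ / z + cy))^2))
    (hmb : mb = Real.sqrt (((f * x₁ / (z + Clb) + cx) - (f * x₂ / (z + Clb) + cx))^2 +
                           ((f * y₁ / (z + Clb) + cy) - (f * y₂ / (z + Clb) + cy))^2)) :
    mb > 0 ∧ ml / mb - 1 > 0 ∧ z = Clb / (ml / mb - 1) := by
  have hzb : 0 < z + Clb := by linarith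
  have hlateral : (x₁, y₁) ≠ (x₂, y₂) := fun h ↦ hne (by simp_all)
  set k := |f| * √((x₁ - x₂) ^ 2 + (y₁ - y₂) ^ 2)
  have hk : 0 < k := mul_pos (abs_pos.2 hf.ne') (Real.sqrt_pos.2 (sub_sq_add_sub_sq_pos hlateral))
  rw [dist_pinhole_projection, abs_of_pos hz] at hml
  rw [dist_pinhole_projection, abs_of_pos hzb] at hmb
  have hratio : ml / mb - 1 = Clb / z := by
    rw [hml, hmb]
    exact div_div_div_add_sub_one hk.ne' hz.ne'
  refine ⟨hmb ▸ div_pos hk hzb, hratio ▸ div_pos hClb hz, ?_⟩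
  rw [hratio, div_div_cancel₀ hClb.ne']
end

section
/- Let f > 0 and C_lb > 0. Consider a left pinhole camera at the origin and a back pinhole camera displaced backward along the optical axis, so that a 3D point with left-frame coordinates (x, y, z) has back-frame coordinates (x, y, z + C_lb); both cameras have focal length f and the same principal point. Let X₁ = (x₁, y₁, z) and X₂ = (x₂, y₂, z) be two distinct 3D points with the same depth z > 0, and let m_l and m_b denote the Euclidean distances between their pixel projections in the left and back images, respectively. Then m_b > 0 and m_l/m_b = (z + C_lb)/z. -/
/-! Both cameras see the two points at one common depth (`z` resp. `z + Clb`), so each image of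
the segment `X₁X₂` is its orthogonal projection scaled by `f / depth`: the pixel distances are
`m_l = (f / z) d` and `m_b = (f / (z + Clb)) d` with `d > 0` the in-plane distance, and `d` cancels
in the ratio. -/

lemma sq_sub_add_sq_sub_pos {x₁ y₁ x₂ y₂ : ℝ} (h : (x₁, y₁) ≠ (x₂, y₂)) :
    0 < (x₁ - x₂) ^ 2 + (y₁ - y₂) ^ 2 := by
  by_cases hx : x₁ = x₂
  · have hy : y₁ - y₂ ≠ 0 := sub_ne_zero.2 fun hy => h (by rw [hx, hy])
    positivity
  · have hx : x₁ - x₂ ≠ 0 := sub_ne_zero.2 hx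
    positivity

lemma pinhole_pixel_dist_of_same_depth (f cx cy x₁ y₁ x₂ y₂ z : ℝ) :
    Real.sqrt (((f * x₁ / z + cx) - (f * x₂ / z + cx)) ^ 2 +
        ((f * y₁ / z + cy) - (f * y₂ / z + cy)) ^ 2) =
      |f / z| * Real.sqrt ((x₁ - x₂) ^ 2 + (y₁ - y₂) ^ 2) := by
  have hscale : ((f * x₁ / z + cx) - (f * x₂ / z + cx)) ^ 2 +
      ((f * y₁ / z + cy) - (f * y₂ / z + cy)) ^ 2 =
        (f / z) ^ 2 * ((x₁ - x₂) ^ 2 + (y₁ - y₂) ^ 2) := by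
    ring
  rw [hscale, Real.sqrt_mul (sq_nonneg _), Real.sqrt_sq_eq_abs]

/-- Key ratio identity in the proof of Proposition 2: for two distinct points at the same
depth `z > 0`, the ratio of left-image to back-image pixel distances equals `(z + Clb)/z`. -/
theorem pixel_distance_ratio
    (f Clb cx cy : ℝ) (hf : f > 0) (hClb : Clb > 0)
    (x₁ y₁ x₂ y₂ z : ℝ) (hz : z > 0)
    (hne : (x₁, y₁, z) ≠ (x₂, y₂, z))
    (ml mb : ℝ)
    (hml : ml = Real.sqrt (((f * x₁ / z + cx) - (f * x₂ / z + cx))^2 +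
                           ((f * y₁ / z + cy) - (f * y₂ / z + cy))^2))
    (hmb : mb = Real.sqrt (((f * x₁ / (z + Clb) + cx) - (f * x₂ / (z + Clb) + cx))^2 +
                           ((f * y₁ / (z + Clb) + cy) - (f * y₂ / (z + Clb) + cy))^2)) :
    mb > 0 ∧ ml / mb = (z + Clb) / z := by
  have hzClb : 0 < z + Clb := by linarith
  have hd : 0 < Real.sqrt ((x₁ - x₂) ^ 2 + (y₁ - y₂) ^ 2) :=
    Real.sqrt_pos.2 (sq_sub_add_sq_sub_pos fun h => hne (by simp_all))
  rw [pinhole_pixel_dist_of_same_depth, abs_of_pos (by positivity)] at hml hmb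
  subst hml hmb
  refine ⟨by positivity, ?_⟩
  field_simp
end

section
/- Let f > 0, C_lr > 0, C_lb > 0, and z > 0. Suppose m_l and m_b are positive reals satisfying m_l/m_b = (z + C_lb)/z (the left/back pixel-distance ratio for a pair of same-depth points at depth z). Suppose the estimated disparities d₁ and d₂ at the two corresponding left-image pixels each equal the true disparity minus an unknown offset q, i.e., d₁ = d₂ = f·C_lr/z - q. Then q = f·(C_lr/C_lb)·(m_l/m_b - 1) - (d₁ + d₂)/2. -/
theorem true_disparity_eq_of_pixel_ratio {K : Type*} [Field K] {f Clr Clb z r : K}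
    (hz : z ≠ 0) (hClb : Clb ≠ 0) (hr : r = (z + Clb) / z) :
    f * (Clr / Clb) * (r - 1) = f * Clr / z := by
  rw [hr]
  field_simp
  ring

theorem disparity_offset_formula_general
    (f Clr Clb z : ℝ) (hClb : Clb > 0) (hz : z > 0)
    (ml mb : ℝ)
    (hratio : ml / mb = (z + Clb) / z)
    (d₁ d₂ q : ℝ)
    (hd₁ : d₁ = f * Clr / z - q) (hd₂ : d₂ = f * Clr / z - q) :
    q = f * (Clr / Clb) * (ml / mb - 1) - (d₁ + d₂) / 2 := by
  rw [true_disparity_eq_of_pixel_ratio hz.ne' hClb.ne' hratio, hd₁, hd₂]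
  ring

/-- Disparity-offset formula (Eq. 11): if the left/back pixel-distance ratio satisfies
`ml/mb = (z + Clb)/z` and the estimated disparities equal the true disparity `f*Clr/z`
minus an unknown offset `q`, then `q` is recovered by the stated formula. -/
theorem disparity_offset_formula
    (f Clr Clb z : ℝ) (hf : f > 0) (hClr : Clr > 0) (hClb : Clb > 0) (hz : z > 0)
    (ml mb : ℝ) (hml : ml > 0) (hmb : mb > 0)
    (hratio : ml / mb = (z + Clb) / z)
    (d₁ d₂ q : ℝ)
    (hd₁ : d₁ = f * Clr / z - q) (hd₂ : d₂ = f * Clr / z - q) :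
    q = f * (Clr / Clb) * (ml / mb - 1) - (d₁ + d₂) / 2 :=
  disparity_offset_formula_general f Clr Clb z hClb hz ml mb hratio d₁ d₂ q hd₁ hd₂
end

section
/- Let f > 0, C_lr > 0, C_lb > 0, and z > 0, and suppose m_l and m_b are positive reals satisfying m_l/m_b = (z + C_lb)/z. Then the true disparity f·C_lr/z of a point at depth z equals f·(C_lr/C_lb)·(m_l/m_b - 1). -/
theorem true_disparity_from_ratio_general
    (f Clr Clb z : ℝ) (hClb : Clb > 0) (hz : z > 0)
    (ml mb : ℝ)
    (hratio : ml / mb = (z + Clb) / z) :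
    f * Clr / z = f * (Clr / Clb) * (ml / mb - 1) := by
  have hshift : ml / mb - 1 = Clb / z := by
    rw [hratio, same_add_div hz.ne', add_sub_cancel_left]
  rw [hshift, mul_assoc, div_mul_div_cancel₀ hClb.ne', mul_div_assoc]

/-- Corollary of Proposition 2 and the depth-to-disparity formula: the true disparity
`f*Clr/z` can be computed from the left/back pixel-distance ratio. -/
theorem true_disparity_from_ratio
    (f Clr Clb z : ℝ) (hf : f > 0) (hClr : Clr > 0) (hClb : Clb > 0) (hz : z > 0)
    (ml mb : ℝ) (hml : ml > 0) (hmb : mb > 0)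
    (hratio : ml / mb = (z + Clb) / z) :
    f * Clr / z = f * (Clr / Clb) * (ml / mb - 1) :=
  true_disparity_from_ratio_general f Clr Clb z hClb hz ml mb hratio
end

section
/- Let a pinhole camera have focal length f > 0 and principal point (c_x, c_y). Let (x, y, z) be a 3D point with z > 0, let θ ∈ (-π/2, π/2) satisfy tan θ = y/z, and let γ be such that θ - γ ∈ (-π/2, π/2). Let (x', y', z') = (x, y·cos γ - z·sin γ, y·sin γ + z·cos γ) and let u = f·x/z + c_x and u' = f·x'/z' + c_x be the pixel column coordinates before and after the rotation. Then |u' - u| ≤ |u - c_x| · (θ² + (θ - γ)²) / (2·cos(θ - γ)). -/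
/-!
Since `y = z tan θ`, the rotated depth is `z' = z cos (θ - γ) / cos θ` while `x' = x`, so the
column offset `u - c_x` is rescaled by `cos θ / cos (θ - γ)`, giving
`u' - u = (u - c_x) (cos θ - cos (θ - γ)) / cos (θ - γ)`. Both cosines lie in `[1 - t²/2, 1]`,
so their difference is at most `(θ² + (θ - γ)²) / 2`.
-/

open Real

lemma add_mul_sin_mul_cos_eq_of_tan_eq {y z θ : ℝ} (γ : ℝ) (hz : z ≠ 0) (hcos : cos θ ≠ 0)
    (htan : tan θ = y / z) :
    y * sin γ + z * cos γ = z * cos (θ - γ) / cos θ := by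
  rw [tan_eq_sin_div_cos, div_eq_div_iff hcos hz] at htan
  rw [cos_sub, eq_div_iff hcos]
  linear_combination (-sin γ) * htan

lemma div_rescale_sub_div (a z c c' : ℝ) (hz : z ≠ 0) (hc' : c' ≠ 0) :
    a / (z * c' / c) - a / z = a / z * (c - c') / c' := by
  field_simp

lemma abs_cos_sub_cos_le (a b : ℝ) : |cos a - cos b| ≤ (a ^ 2 + b ^ 2) / 2 := by
  have ha := one_sub_sq_div_two_le_cos (x := a)
  have hb := one_sub_sq_div_two_le_cos (x := b)
  rw [abs_le]
  constructor <;> linarith [cos_le_one a, cos_le_one b]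

theorem column_invariance_approx_general
    (f cx : ℝ)
    (x y z θ γ : ℝ) (hz : z > 0)
    (hθ : θ ∈ Set.Ioo (-(Real.pi / 2)) (Real.pi / 2))
    (htan : Real.tan θ = y / z)
    (hθγ : θ - γ ∈ Set.Ioo (-(Real.pi / 2)) (Real.pi / 2))
    (x' z' : ℝ)
    (hx' : x' = x)
    (hz' : z' = y * Real.sin γ + z * Real.cos γ)
    (u u' : ℝ)
    (hu : u = f * x / z + cx)
    (hu' : u' = f * x' / z' + cx) :
    |u' - u| ≤ |u - cx| * (θ ^ 2 + (θ - γ) ^ 2) / (2 * Real.cos (θ - γ)) := by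
  have hcθ : cos θ ≠ 0 := (cos_pos_of_mem_Ioo hθ).ne'
  have hcθγ : 0 < cos (θ - γ) := cos_pos_of_mem_Ioo hθγ
  have hshift : u' - u = (u - cx) * (cos θ - cos (θ - γ)) / cos (θ - γ) := by
    rw [hu', hu, hx', hz', add_mul_sin_mul_cos_eq_of_tan_eq γ hz.ne' hcθ htan, add_sub_cancel_right,
      add_sub_add_right_eq_sub, div_rescale_sub_div _ _ _ _ hz.ne' hcθγ.ne', mul_div_assoc]
  calc |u' - u| = |u - cx| * |cos θ - cos (θ - γ)| / cos (θ - γ) := by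
        rw [hshift, abs_div, abs_mul, abs_of_pos hcθγ]
    _ ≤ |u - cx| * ((θ ^ 2 + (θ - γ) ^ 2) / 2) / cos (θ - γ) := by
        gcongr
        exact abs_cos_sub_cos_le θ (θ - γ)
    _ = |u - cx| * (θ ^ 2 + (θ - γ) ^ 2) / (2 * cos (θ - γ)) := by
        ring

/-- Quantitative version of the approximation `u' ≈ u` (Eq. 3) in Proposition 1: a small
rotation by `γ` about the camera's x-axis leaves the pixel column coordinate approximately
unchanged, with quadratic-order error in the ray angles. -/
theorem column_invariance_approx
    (f cx cy : ℝ) (hf : f > 0)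
    (x y z θ γ : ℝ) (hz : z > 0)
    (hθ : θ ∈ Set.Ioo (-(Real.pi / 2)) (Real.pi / 2))
    (htan : Real.tan θ = y / z)
    (hθγ : θ - γ ∈ Set.Ioo (-(Real.pi / 2)) (Real.pi / 2))
    (x' y' z' : ℝ)
    (hx' : x' = x)
    (hy' : y' = y * Real.cos γ - z * Real.sin γ)
    (hz' : z' = y * Real.sin γ + z * Real.cos γ)
    (u u' : ℝ)
    (hu : u = f * x / z + cx)
    (hu' : u' = f * x' / z' + cx) :
    |u' - u| ≤ |u - cx| * (θ ^ 2 + (θ - γ) ^ 2) / (2 * Real.cos (θ - γ)) :=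
  column_invariance_approx_general f cx x y z θ γ hz hθ htan hθγ x' z' hx' hz' u u' hu hu'
end
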